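/- Let G be a second countable locally compact Hausdorff topological group with left Haar measure μ and let ω and ν be Borel 2-cocycles on G. On L²(G×G, μ×μ) define U by (Uξ)(s,t) = \overline{ν(t⁻¹s,s⁻¹)}·ξ(s,s⁻¹t). Then U is a well-defined unitary, and for every g ∈ G one has U ∘ L^{ων}_g ∘ U* = Λ^{ω,ν}_g, where L^{ων}_g is the unitary (L^{ων}_g ξ)(s,t) = ω(s⁻¹,g)·ν(s⁻¹,g)·ξ(g⁻¹s,t) and Λ^{ω,ν}_g is the unitary (Λ^{ω,ν}_g ξ)(s,t) = ω(s⁻¹,g)·ν(t⁻¹,g)·ξ(g⁻¹s,g⁻¹t). (In the notation of the paper: Wν̃*(λ^{ων}_g⊗1)ν̃W* = λ^ω_g ⊗ λ^ν_g.) -/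

import Mathlib

/-!
Every operator involved is a weighted composition operator `ξ ↦ m · (ξ ∘ e)` on `L²(G × G)`,
with `e` a measure-preserving bijection and `|m| = 1`: for `U` the map is the shear
`(s, t) ↦ (s, s⁻¹t)` and the weight `conj ν(t⁻¹s, s⁻¹)`. Such operators are unitary, and
composing two of them composes the maps and multiplies the weights along them. Both sides of
`U L_g = Λ_g U` therefore send `ξ` to a multiple of `(s, t) ↦ ξ(g⁻¹s, s⁻¹t)`, and the two weights
agree by the cocycle identity for `ν` at `(t⁻¹s, s⁻¹, g)`.
-/

open MeasureTheory Filter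
open scoped ENNReal

namespace MeasureTheory

variable {α 𝕜 E : Type*} [MeasurableSpace α] {μ : Measure α} [NormedField 𝕜]
  [NormedAddCommGroup E] [NormedSpace 𝕜 E] {p : ℝ≥0∞} {m : α → 𝕜}

theorem eLpNorm_smul_of_norm_eq_one (hm1 : ∀ x, ‖m x‖ = 1) (f : α → E) :
    eLpNorm (fun x => m x • f x) p μ = eLpNorm f p μ :=
  eLpNorm_congr_norm_ae (Eventually.of_forall fun x => by rw [norm_smul, hm1, one_mul])

theorem MemLp.smul_of_norm_eq_one {f : α → E} (hf : MemLp f p μ) (hm : AEStronglyMeasurable m μ)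
    (hm1 : ∀ x, ‖m x‖ = 1) : MemLp (fun x => m x • f x) p μ :=
  ⟨hm.smul hf.1, by rw [eLpNorm_smul_of_norm_eq_one hm1]; exact hf.2⟩

namespace Lp

variable [Fact (1 ≤ p)]

section Multiplication

variable (m) (hm : AEStronglyMeasurable m μ) (hm1 : ∀ x, ‖m x‖ = 1)

noncomputable def mulUnimodularₗᵢ : Lp E p μ →ₗᵢ[𝕜] Lp E p μ where
  toFun ξ := ((Lp.memLp ξ).smul_of_norm_eq_one hm hm1).toLp _
  map_add' ξ η := by
    rw [← MemLp.toLp_add]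
    refine MemLp.toLp_congr _ _ ?_
    filter_upwards [Lp.coeFn_add ξ η] with x hx
    rw [hx, Pi.add_apply, Pi.add_apply, smul_add]
  map_smul' c ξ := by
    rw [RingHom.id_apply, ← MemLp.toLp_const_smul]
    refine MemLp.toLp_congr _ _ ?_
    filter_upwards [Lp.coeFn_smul c ξ] with x hx
    rw [hx, Pi.smul_apply, Pi.smul_apply, smul_comm]
  norm_map' ξ := by
    rw [LinearMap.coe_mk, AddHom.coe_mk, Lp.norm_toLp, eLpNorm_smul_of_norm_eq_one hm1,
      Lp.norm_def]

theorem coeFn_mulUnimodularₗᵢ (ξ : Lp E p μ) :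
    mulUnimodularₗᵢ m hm hm1 ξ =ᵐ[μ] fun x => m x • ξ x :=
  MemLp.coeFn_toLp ((Lp.memLp ξ).smul_of_norm_eq_one hm hm1)

noncomputable def mulUnimodular : Lp E p μ ≃ₗᵢ[𝕜] Lp E p μ :=
  .ofSurjective (mulUnimodularₗᵢ m hm hm1) fun ξ => by
    have hm1' : ∀ x, ‖m⁻¹ x‖ = 1 := fun x => by rw [Pi.inv_apply, norm_inv, hm1, inv_one]
    refine ⟨mulUnimodularₗᵢ m⁻¹ hm.inv₀ hm1' ξ, Lp.ext ?_⟩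
    filter_upwards [coeFn_mulUnimodularₗᵢ m hm hm1 (mulUnimodularₗᵢ m⁻¹ hm.inv₀ hm1' ξ),
      coeFn_mulUnimodularₗᵢ m⁻¹ hm.inv₀ hm1' ξ] with x h h'
    rw [h, h', Pi.inv_apply, smul_inv_smul₀ (norm_ne_zero_iff.mp ((hm1 x).trans_ne one_ne_zero))]

theorem coeFn_mulUnimodular (ξ : Lp E p μ) :
    mulUnimodular m hm hm1 ξ =ᵐ[μ] fun x => m x • ξ x :=
  coeFn_mulUnimodularₗᵢ m hm hm1 ξ

end Multiplication

variable (𝕜) in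
noncomputable def compMeasurePreservingEquiv (e : α ≃ᵐ α) (he : MeasurePreserving e μ μ) :
    Lp E p μ ≃ₗᵢ[𝕜] Lp E p μ :=
  .ofSurjective (compMeasurePreservingₗᵢ 𝕜 e he) fun ξ => by
    refine ⟨compMeasurePreserving e.symm (he.symm e) ξ, Lp.ext ?_⟩
    filter_upwards [coeFn_compMeasurePreserving (compMeasurePreserving e.symm (he.symm e) ξ) he,
      he.quasiMeasurePreserving.ae_eq_comp (coeFn_compMeasurePreserving ξ (he.symm e))]
      with x h h'
    exact h.trans (h'.trans (congrArg ξ (e.symm_apply_apply x)))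

theorem coeFn_compMeasurePreservingEquiv (e : α ≃ᵐ α) (he : MeasurePreserving e μ μ)
    (ξ : Lp E p μ) : compMeasurePreservingEquiv 𝕜 e he ξ =ᵐ[μ] ξ ∘ e :=
  coeFn_compMeasurePreserving ξ he

section WeightedComposition

variable (m) (hm : AEStronglyMeasurable m μ) (hm1 : ∀ x, ‖m x‖ = 1) (e : α ≃ᵐ α)
  (he : MeasurePreserving e μ μ)

noncomputable def weightedComp : Lp E p μ ≃ₗᵢ[𝕜] Lp E p μ :=
  (compMeasurePreservingEquiv 𝕜 e he).trans (mulUnimodular m hm hm1)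

theorem coeFn_weightedComp (ξ : Lp E p μ) :
    weightedComp m hm hm1 e he ξ =ᵐ[μ] fun x => m x • ξ (e x) := by
  filter_upwards [coeFn_mulUnimodular m hm hm1 (compMeasurePreservingEquiv 𝕜 e he ξ),
    coeFn_compMeasurePreservingEquiv (𝕜 := 𝕜) e he ξ] with x h h'
  rw [weightedComp, LinearIsometryEquiv.trans_apply, h, h', Function.comp_apply]

end WeightedComposition

variable {m₁ m₂ m₃ m₄ : α → 𝕜} {e₁ e₂ e₃ e₄ : α ≃ᵐ α}
  {hm₁ : AEStronglyMeasurable m₁ μ} {hm₂ : AEStronglyMeasurable m₂ μ}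
  {hm₃ : AEStronglyMeasurable m₃ μ} {hm₄ : AEStronglyMeasurable m₄ μ}
  {hm₁' : ∀ x, ‖m₁ x‖ = 1} {hm₂' : ∀ x, ‖m₂ x‖ = 1} {hm₃' : ∀ x, ‖m₃ x‖ = 1}
  {hm₄' : ∀ x, ‖m₄ x‖ = 1} {he₁ : MeasurePreserving e₁ μ μ} {he₂ : MeasurePreserving e₂ μ μ}
  {he₃ : MeasurePreserving e₃ μ μ} {he₄ : MeasurePreserving e₄ μ μ}

theorem coeFn_weightedComp_weightedComp (ξ : Lp E p μ) :
    weightedComp m₁ hm₁ hm₁' e₁ he₁ (weightedComp m₂ hm₂ hm₂' e₂ he₂ ξ) =ᵐ[μ]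
      fun x => (m₁ x * m₂ (e₁ x)) • ξ (e₂ (e₁ x)) := by
  filter_upwards [coeFn_weightedComp m₁ hm₁ hm₁' e₁ he₁ (weightedComp m₂ hm₂ hm₂' e₂ he₂ ξ),
    he₁.quasiMeasurePreserving.ae_eq_comp (coeFn_weightedComp m₂ hm₂ hm₂' e₂ he₂ ξ)]
    with x h h'
  rw [h, mul_smul]
  exact congrArg (m₁ x • ·) h'

theorem weightedComp_weightedComp_congr (hm : ∀ x, m₁ x * m₂ (e₁ x) = m₃ x * m₄ (e₃ x))
    (he : ∀ x, e₂ (e₁ x) = e₄ (e₃ x)) (ξ : Lp E p μ) :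
    weightedComp m₁ hm₁ hm₁' e₁ he₁ (weightedComp m₂ hm₂ hm₂' e₂ he₂ ξ) =
      weightedComp m₃ hm₃ hm₃' e₃ he₃ (weightedComp m₄ hm₄ hm₄' e₄ he₄ ξ) := by
  refine Lp.ext <| (coeFn_weightedComp_weightedComp ξ).trans <|
    .trans (.of_eq (funext fun x => ?_)) (coeFn_weightedComp_weightedComp ξ).symm
  rw [hm, he]

end Lp

end MeasureTheory

open ComplexConjugate

theorem conj_mul_eq_mul_conj_of_cocycle {G : Type*} [Mul G] {ν : G → G → ℂ}
    (hν1 : ∀ g h, ‖ν g h‖ = 1) (hν : ∀ g h k, ν g h * ν (g * h) k = ν g (h * k) * ν h k)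
    (a b c : G) : conj (ν a b) * ν b c = ν (a * b) c * conj (ν a (b * c)) := by
  have hconj : ∀ g h, conj (ν g h) * ν g h = 1 := fun g h => by
    rw [Complex.conj_mul', hν1, Complex.ofReal_one, one_pow]
  linear_combination (-conj (ν a b) * ν b c) * hconj a (b * c) +
    (conj (ν a b) * conj (ν a (b * c))) * (hν a b c).symm +
    (conj (ν a (b * c)) * ν (a * b) c) * hconj a b

section TwistedOperators

variable {G : Type*} [Group G] [MeasurableSpace G] [MeasurableMul₂ G] [MeasurableInv G]
  (μ : Measure G) [SFinite μ] [μ.IsMulLeftInvariant]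

noncomputable def twistedShear (ν : G → G → ℂ) (hν : Measurable (Function.uncurry ν))
    (hν1 : ∀ g h, ‖ν g h‖ = 1) : Lp ℂ 2 (μ.prod μ) ≃ₗᵢ[ℂ] Lp ℂ 2 (μ.prod μ) :=
  Lp.weightedComp (fun q => conj (ν (q.2⁻¹ * q.1) q.1⁻¹))
    (Complex.continuous_conj.measurable.comp
      (hν.comp (f := fun q : G × G => (q.2⁻¹ * q.1, q.1⁻¹)) (by fun_prop))).aestronglyMeasurable
    (fun q => by rw [Complex.norm_conj, hν1])
    (MeasurableEquiv.shearMulRight G).symm ((measurePreserving_prod_mul μ μ).symm _)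

theorem coeFn_twistedShear (ν : G → G → ℂ) (hν : Measurable (Function.uncurry ν))
    (hν1 : ∀ g h, ‖ν g h‖ = 1) (ξ : Lp ℂ 2 (μ.prod μ)) :
    twistedShear μ ν hν hν1 ξ =ᵐ[μ.prod μ]
      fun q => conj (ν (q.2⁻¹ * q.1) q.1⁻¹) * ξ (q.1, q.1⁻¹ * q.2) :=
  Lp.coeFn_weightedComp _ _ _ _ _ ξ

noncomputable def twistedTranslateFst (σ : G → G → ℂ) (hσ : Measurable (Function.uncurry σ))
    (hσ1 : ∀ g h, ‖σ g h‖ = 1) (g : G) : Lp ℂ 2 (μ.prod μ) ≃ₗᵢ[ℂ] Lp ℂ 2 (μ.prod μ) :=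
  Lp.weightedComp (fun q : G × G => σ q.1⁻¹ g)
    (hσ.comp (f := fun q : G × G => (q.1⁻¹, g)) (by fun_prop)).aestronglyMeasurable
    (fun q => hσ1 _ _) ((MeasurableEquiv.mulLeft g⁻¹).prodCongr (.refl G))
    ((measurePreserving_mul_left μ g⁻¹).prod (.id μ))

theorem coeFn_twistedTranslateFst (σ : G → G → ℂ) (hσ : Measurable (Function.uncurry σ))
    (hσ1 : ∀ g h, ‖σ g h‖ = 1) (g : G) (ξ : Lp ℂ 2 (μ.prod μ)) :
    twistedTranslateFst μ σ hσ hσ1 g ξ =ᵐ[μ.prod μ] fun q => σ q.1⁻¹ g * ξ (g⁻¹ * q.1, q.2) :=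
  Lp.coeFn_weightedComp _ _ _ _ _ ξ

noncomputable def twistedTranslateProd (ω ν : G → G → ℂ) (hω : Measurable (Function.uncurry ω))
    (hν : Measurable (Function.uncurry ν)) (hω1 : ∀ g h, ‖ω g h‖ = 1)
    (hν1 : ∀ g h, ‖ν g h‖ = 1) (g : G) : Lp ℂ 2 (μ.prod μ) ≃ₗᵢ[ℂ] Lp ℂ 2 (μ.prod μ) :=
  Lp.weightedComp (fun q : G × G => ω q.1⁻¹ g * ν q.2⁻¹ g)
    ((hω.comp (f := fun q : G × G => (q.1⁻¹, g)) (by fun_prop)).mul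
      (hν.comp (f := fun q : G × G => (q.2⁻¹, g)) (by fun_prop))).aestronglyMeasurable
    (fun q => by rw [norm_mul, hω1, hν1, one_mul])
    ((MeasurableEquiv.mulLeft g⁻¹).prodCongr (MeasurableEquiv.mulLeft g⁻¹))
    ((measurePreserving_mul_left μ g⁻¹).prod (measurePreserving_mul_left μ g⁻¹))

theorem coeFn_twistedTranslateProd (ω ν : G → G → ℂ) (hω : Measurable (Function.uncurry ω))
    (hν : Measurable (Function.uncurry ν)) (hω1 : ∀ g h, ‖ω g h‖ = 1)
    (hν1 : ∀ g h, ‖ν g h‖ = 1) (g : G) (ξ : Lp ℂ 2 (μ.prod μ)) :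
    twistedTranslateProd μ ω ν hω hν hω1 hν1 g ξ =ᵐ[μ.prod μ]
      fun q => ω q.1⁻¹ g * ν q.2⁻¹ g * ξ (g⁻¹ * q.1, g⁻¹ * q.2) :=
  Lp.coeFn_weightedComp _ _ _ _ _ ξ

theorem twistedShear_twistedTranslateFst {ω ν : G → G → ℂ} (hω : Measurable (Function.uncurry ω))
    (hν : Measurable (Function.uncurry ν)) (hω1 : ∀ g h, ‖ω g h‖ = 1) (hν1 : ∀ g h, ‖ν g h‖ = 1)
    (hcoc : ∀ g h k, ν g h * ν (g * h) k = ν g (h * k) * ν h k) (g : G)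
    (ξ : Lp ℂ 2 (μ.prod μ)) :
    twistedShear μ ν hν hν1 (twistedTranslateFst μ (fun a b => ω a b * ν a b) (hω.mul hν)
      (fun a b => by rw [norm_mul, hω1, hν1, one_mul]) g ξ) =
      twistedTranslateProd μ ω ν hω hν hω1 hν1 g (twistedShear μ ν hν hν1 ξ) := by
  refine Lp.weightedComp_weightedComp_congr (fun ⟨s, t⟩ => ?_) (fun ⟨s, t⟩ => ?_) ξ
  · show conj (ν (t⁻¹ * s) s⁻¹) * (ω s⁻¹ g * ν s⁻¹ g) =
      ω s⁻¹ g * ν t⁻¹ g * conj (ν ((g⁻¹ * t)⁻¹ * (g⁻¹ * s)) (g⁻¹ * s)⁻¹)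
    have hcoc' := conj_mul_eq_mul_conj_of_cocycle hν1 hcoc (t⁻¹ * s) s⁻¹ g
    rw [mul_inv_cancel_right] at hcoc'
    rw [show (g⁻¹ * t)⁻¹ * (g⁻¹ * s) = t⁻¹ * s by group, show (g⁻¹ * s)⁻¹ = s⁻¹ * g by group]
    linear_combination ω s⁻¹ g * hcoc'
  · show (g⁻¹ * s, s⁻¹ * t) = (g⁻¹ * s, (g⁻¹ * s)⁻¹ * (g⁻¹ * t))
    rw [mul_inv_rev, inv_inv, mul_assoc, mul_inv_cancel_left]

end TwistedOperators

theorem stmt_10_general {G : Type*} [TopologicalSpace G] [Group G] [IsTopologicalGroup G]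
    [SecondCountableTopology G] [LocallyCompactSpace G]
    [MeasurableSpace G] [BorelSpace G]
    (μ : Measure G) [μ.IsHaarMeasure]
    (ω ν : G → G → ℂ)
    (hmeasω : Measurable fun p : G × G => ω p.1 p.2)
    (habsω : ∀ g h : G, ‖ω g h‖ = 1)
    (hmeasν : Measurable fun p : G × G => ν p.1 p.2)
    (habsν : ∀ g h : G, ‖ν g h‖ = 1)
    (hcocν : ∀ g h k : G, ν g h * ν (g * h) k = ν g (h * k) * ν h k) :
    ∃ U : Lp ℂ 2 (μ.prod μ) ≃ₗᵢ[ℂ] Lp ℂ 2 (μ.prod μ),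
      (∀ ξ : Lp ℂ 2 (μ.prod μ), (U ξ : G × G → ℂ) =ᵐ[μ.prod μ]
        fun p => starRingEnd ℂ (ν (p.2⁻¹ * p.1) p.1⁻¹) * ξ (p.1, p.1⁻¹ * p.2)) ∧
      ∀ g : G,
        (∃ L : Lp ℂ 2 (μ.prod μ) ≃ₗᵢ[ℂ] Lp ℂ 2 (μ.prod μ),
          ∀ ξ : Lp ℂ 2 (μ.prod μ), (L ξ : G × G → ℂ) =ᵐ[μ.prod μ]
            fun p => ω p.1⁻¹ g * ν p.1⁻¹ g * ξ (g⁻¹ * p.1, p.2)) ∧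
        (∃ Lam : Lp ℂ 2 (μ.prod μ) ≃ₗᵢ[ℂ] Lp ℂ 2 (μ.prod μ),
          ∀ ξ : Lp ℂ 2 (μ.prod μ), (Lam ξ : G × G → ℂ) =ᵐ[μ.prod μ]
            fun p => ω p.1⁻¹ g * ν p.2⁻¹ g * ξ (g⁻¹ * p.1, g⁻¹ * p.2)) ∧
        (∀ L Lam : Lp ℂ 2 (μ.prod μ) ≃ₗᵢ[ℂ] Lp ℂ 2 (μ.prod μ),
          (∀ ξ : Lp ℂ 2 (μ.prod μ), (L ξ : G × G → ℂ) =ᵐ[μ.prod μ]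
            fun p => ω p.1⁻¹ g * ν p.1⁻¹ g * ξ (g⁻¹ * p.1, p.2)) →
          (∀ ξ : Lp ℂ 2 (μ.prod μ), (Lam ξ : G × G → ℂ) =ᵐ[μ.prod μ]
            fun p => ω p.1⁻¹ g * ν p.2⁻¹ g * ξ (g⁻¹ * p.1, g⁻¹ * p.2)) →
          ∀ ξ : Lp ℂ 2 (μ.prod μ), U (L (U.symm ξ)) = Lam ξ) := by
  have hσ : Measurable (Function.uncurry fun a b => ω a b * ν a b) := hmeasω.mul hmeasν
  have hσ1 : ∀ a b, ‖ω a b * ν a b‖ = 1 := fun a b => by rw [norm_mul, habsω, habsν, one_mul]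
  refine ⟨twistedShear μ ν hmeasν habsν, coeFn_twistedShear μ ν hmeasν habsν, fun g =>
    ⟨⟨_, coeFn_twistedTranslateFst μ _ hσ hσ1 g⟩,
      ⟨_, coeFn_twistedTranslateProd μ ω ν hmeasω hmeasν habsω habsν g⟩,
      fun L Lam hL hLam ξ => ?_⟩⟩
  obtain rfl : L = twistedTranslateFst μ _ hσ hσ1 g :=
    LinearIsometryEquiv.ext fun η => Lp.ext <|
      (hL η).trans (coeFn_twistedTranslateFst μ _ hσ hσ1 g η).symm
  obtain rfl : Lam = twistedTranslateProd μ ω ν hmeasω hmeasν habsω habsν g :=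
    LinearIsometryEquiv.ext fun η => Lp.ext <|
      (hLam η).trans (coeFn_twistedTranslateProd μ ω ν hmeasω hmeasν habsω habsν g η).symm
  rw [twistedShear_twistedTranslateFst μ hmeasω hmeasν habsω habsν hcocν,
    LinearIsometryEquiv.apply_symm_apply]

/-- Let `ω` and `ν` be Borel `𝕋`-valued 2-cocycles on `G`. On `L²(G×G)` define `U` by
`(Uξ)(s,t) = conj(ν(t⁻¹s,s⁻¹))·ξ(s,s⁻¹t)`. Then `U` is a well-defined unitary, and for every
`g` one has `U ∘ L^{ων}_g ∘ U* = Λ^{ω,ν}_g`, where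
`(L^{ων}_g ξ)(s,t) = ω(s⁻¹,g)·ν(s⁻¹,g)·ξ(g⁻¹s,t)` and
`(Λ^{ω,ν}_g ξ)(s,t) = ω(s⁻¹,g)·ν(t⁻¹,g)·ξ(g⁻¹s,g⁻¹t)`.
(In the paper's notation: `Wν̃*(λ^{ων}_g⊗1)ν̃W* = λ^ω_g ⊗ λ^ν_g`.) -/
theorem stmt_10 {G : Type*} [TopologicalSpace G] [Group G] [IsTopologicalGroup G]
    [SecondCountableTopology G] [LocallyCompactSpace G] [T2Space G]
    [MeasurableSpace G] [BorelSpace G]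
    (μ : Measure G) [μ.IsHaarMeasure]
    (ω ν : G → G → ℂ)
    (hmeasω : Measurable fun p : G × G => ω p.1 p.2)
    (habsω : ∀ g h : G, ‖ω g h‖ = 1)
    (hcocω : ∀ g h k : G, ω g h * ω (g * h) k = ω g (h * k) * ω h k)
    (hmeasν : Measurable fun p : G × G => ν p.1 p.2)
    (habsν : ∀ g h : G, ‖ν g h‖ = 1)
    (hcocν : ∀ g h k : G, ν g h * ν (g * h) k = ν g (h * k) * ν h k) :
    ∃ U : Lp ℂ 2 (μ.prod μ) ≃ₗᵢ[ℂ] Lp ℂ 2 (μ.prod μ),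
      (∀ ξ : Lp ℂ 2 (μ.prod μ), (U ξ : G × G → ℂ) =ᵐ[μ.prod μ]
        fun p => starRingEnd ℂ (ν (p.2⁻¹ * p.1) p.1⁻¹) * ξ (p.1, p.1⁻¹ * p.2)) ∧
      ∀ g : G,
        (∃ L : Lp ℂ 2 (μ.prod μ) ≃ₗᵢ[ℂ] Lp ℂ 2 (μ.prod μ),
          ∀ ξ : Lp ℂ 2 (μ.prod μ), (L ξ : G × G → ℂ) =ᵐ[μ.prod μ]
            fun p => ω p.1⁻¹ g * ν p.1⁻¹ g * ξ (g⁻¹ * p.1, p.2)) ∧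
        (∃ Lam : Lp ℂ 2 (μ.prod μ) ≃ₗᵢ[ℂ] Lp ℂ 2 (μ.prod μ),
          ∀ ξ : Lp ℂ 2 (μ.prod μ), (Lam ξ : G × G → ℂ) =ᵐ[μ.prod μ]
            fun p => ω p.1⁻¹ g * ν p.2⁻¹ g * ξ (g⁻¹ * p.1, g⁻¹ * p.2)) ∧
        (∀ L Lam : Lp ℂ 2 (μ.prod μ) ≃ₗᵢ[ℂ] Lp ℂ 2 (μ.prod μ),
          (∀ ξ : Lp ℂ 2 (μ.prod μ), (L ξ : G × G → ℂ) =ᵐ[μ.prod μ]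
            fun p => ω p.1⁻¹ g * ν p.1⁻¹ g * ξ (g⁻¹ * p.1, p.2)) →
          (∀ ξ : Lp ℂ 2 (μ.prod μ), (Lam ξ : G × G → ℂ) =ᵐ[μ.prod μ]
            fun p => ω p.1⁻¹ g * ν p.2⁻¹ g * ξ (g⁻¹ * p.1, g⁻¹ * p.2)) →
          ∀ ξ : Lp ℂ 2 (μ.prod μ), U (L (U.symm ξ)) = Lam ξ) :=
  stmt_10_general μ ω ν hmeasω habsω hmeasν habsν hcocν
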